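/- Let n, d ≥ 1 be integers, let α, β > 0 and γ ≠ 0, and let p, q, r satisfy 1 ≤ p ≤ 2 ≤ q ≤ ∞, 1 ≤ r ≤ 2(d+1)/(d+3), and not simultaneously d = 1, p = 2, q = 2. For μ > 0 with 1 < μ^{1/γ} ≤ 2 (so μ ≠ 1) and each integer k ≥ 0 let μ_k be the unique λ > 0 with 1 + ((2k+n)λ)^α + λ^{2β} = μ^{1/γ}. Set E = n(1/p − 1/q) + d(1/r − 1/r′), σ = φ(1/p − 1/2) + φ(1/2 − 1/q), D = E/α − 1, and C₀ = E/(2β) + (1/α − 1/(2β))(σ + 1) − 1. Then there is a constant C (depending on n, d, p, q, r, α, β, γ) such that for every such μ: Σ_{k=0}^{∞} |1−μ|^{−1} μ_k^{E} (2k+n)^{σ} ≤ C |1−μ|^{D} whenever |1−μ|^{1/α − 1/(2β)} ≤ 1, and Σ_{k=0}^{∞} |1−μ|^{−1} μ_k^{E} (2k+n)^{σ} ≤ C |1−μ|^{C₀} whenever |1−μ|^{1/α − 1/(2β)} > 1. -/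

import Mathlib

open scoped ENNReal

/-- The piecewise-linear exponent function `φ` of Koch–Ricci:
`φ(s) = −s/2` for `s ≤ s* = 1/(2n+1)` and `φ(s) = ns − 1/2` for `s ≥ s*`. -/
noncomputable def phiKR (n : ℕ) (s : ℝ) : ℝ :=
  if s ≤ 1 / (2 * n + 1) then -s / 2 else n * s - 1 / 2

/-! Put `δ = |1 - μ|` and `ν = μ^{1/γ} ∈ (1, 2]`. Bernoulli's inequality gives `ν - 1 ≲ δ`, so
both `((2k+n) μ_k)^α` and `μ_k^{2β}` are `≲ δ`, whence `μ_k^E ≲ δ^{E/α} (2k+n)^{-E}` and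
`μ_k^E ≲ δ^{E/(2β)}`.
Since `-1 < σ` and `σ + 1 < E`, the first bound alone sums to `≲ δ^{E/α - 1}`; when
`M = δ^{1/α - 1/(2β)} > 1`, using the second bound for `k < M` and the first for `k ≥ M` gives two
pieces both of size `≲ δ^{C₀}`. The power sums are compared with telescoping sums through the
tangent-line inequality for `x ↦ x^s`. -/

open Real Finset

theorem mul_sub_mul_rpow_le {x y s : ℝ} (hx : 0 < x) (hxy : x ≤ y) (hs : 0 ≤ s) :
    s * (y - x) * x ^ s ≤ y * (y ^ s - x ^ s) := by
  have hy : 0 < y := hx.trans_le hxy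
  have h := one_add_mul_self_le_rpow_one_add (s := y / x - 1)
    (by linarith [div_nonneg hy.le hx.le]) (p := s + 1) (by linarith)
  rw [add_sub_cancel, div_rpow hy.le hx.le, rpow_add_one hy.ne', rpow_add_one hx.ne',
    le_div_iff₀ (by positivity)] at h
  have hyx : (1 + (s + 1) * (y / x - 1)) * (x ^ s * x) =
      x ^ s * x + (s + 1) * (y - x) * x ^ s := by
    field_simp
  linarith

theorem mul_sub_mul_rpow_neg_le {x y s : ℝ} (hx : 0 < x) (hxy : x ≤ y) (hs : 0 ≤ s) :
    s * (y - x) * y ^ (-s - 1) ≤ x ^ (-s) - y ^ (-s) := by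
  have hy : 0 < y := hx.trans_le hxy
  have hxs : 0 < x ^ s := rpow_pos_of_pos hx s
  have hys : 0 < y ^ s := rpow_pos_of_pos hy s
  have e : x ^ (-s) - y ^ (-s) - s * (y - x) * y ^ (-s - 1)
      = (y * (y ^ s - x ^ s) - s * (y - x) * x ^ s) / (x ^ s * y ^ s * y) := by
    rw [rpow_sub_one hy.ne', rpow_neg hy.le, rpow_neg hx.le]
    field_simp
  have := div_nonneg (sub_nonneg.2 (mul_sub_mul_rpow_le hx hxy hs))
    (by positivity : 0 ≤ x ^ s * y ^ s * y)
  linarith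

-- The factor `3` in the next two constants comes from `x + 2 ≤ 3 x` for `x ≥ 1`.
theorem rpow_le_mul_add_two_rpow_sub_rpow {x σ : ℝ} (hx : 1 ≤ x) (hσ : -1 < σ) :
    x ^ σ ≤ 3 / (2 * (σ + 1)) * ((x + 2) ^ (σ + 1) - x ^ (σ + 1)) := by
  have hx0 : 0 < x := by linarith
  have h := mul_sub_mul_rpow_le hx0 (by linarith : x ≤ x + 2) (by linarith : 0 ≤ σ + 1)
  set D := (x + 2) ^ (σ + 1) - x ^ (σ + 1)
  have hD : 0 ≤ D := by nlinarith [rpow_pos_of_pos hx0 (σ + 1)]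
  rw [rpow_add_one hx0.ne'] at h
  have : x * (2 * (σ + 1) * x ^ σ) ≤ x * (3 * D) := by
    nlinarith [mul_nonneg (sub_nonneg.2 hx) hD]
  rw [div_mul_eq_mul_div, le_div_iff₀ (by linarith)]
  nlinarith [le_of_mul_le_mul_left this hx0]

theorem rpow_le_mul_rpow_sub_add_two_rpow {x τ : ℝ} (hx : 1 ≤ x) (hτ : τ < -1) :
    x ^ τ ≤ 3 ^ (-τ) / (2 * (-τ - 1)) * (x ^ (τ + 1) - (x + 2) ^ (τ + 1)) := by
  have hx0 : 0 < x := by linarith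
  have h := mul_sub_mul_rpow_neg_le hx0 (by linarith : x ≤ x + 2) (by linarith : 0 ≤ -τ - 1)
  rw [show -(-τ - 1) - 1 = τ by ring, show -(-τ - 1) = τ + 1 by ring, add_sub_cancel_left] at h
  have h3 : (3 * x) ^ τ ≤ (x + 2) ^ τ :=
    rpow_le_rpow_of_nonpos (by linarith) (by linarith) (by linarith)
  rw [mul_rpow (by norm_num) hx0.le] at h3
  have h33 : 3 ^ (-τ) * 3 ^ τ = (1 : ℝ) := by rw [← rpow_add (by norm_num)]; simp
  have h3τ : 0 < (3 : ℝ) ^ (-τ) := by positivity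
  rw [div_mul_eq_mul_div, le_div_iff₀ (by linarith)]
  calc x ^ τ * (2 * (-τ - 1)) = 3 ^ (-τ) * ((-τ - 1) * 2 * (3 ^ τ * x ^ τ)) := by
        linear_combination (-(x ^ τ * (2 * (-τ - 1)))) * h33
    _ ≤ 3 ^ (-τ) * ((-τ - 1) * 2 * (x + 2) ^ τ) := by gcongr; linarith
    _ ≤ 3 ^ (-τ) * (x ^ (τ + 1) - (x + 2) ^ (τ + 1)) := by gcongr

section PowerSums

variable {x₀ : ℝ}

theorem one_le_two_mul_add (hx₀ : 1 ≤ x₀) (k : ℕ) : 1 ≤ 2 * (k : ℝ) + x₀ := by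
  linarith [k.cast_nonneg (α := ℝ)]

theorem sum_range_rpow_le_of_neg_one_lt (hx₀ : 1 ≤ x₀) {σ : ℝ} (hσ : -1 < σ) (K : ℕ) :
    ∑ k ∈ range K, (2 * (k : ℝ) + x₀) ^ σ ≤
      3 / (2 * (σ + 1)) * (2 * (K : ℝ) + x₀) ^ (σ + 1) := by
  set f : ℕ → ℝ := fun k => (2 * (k : ℝ) + x₀) ^ (σ + 1)
  calc ∑ k ∈ range K, (2 * (k : ℝ) + x₀) ^ σ
      ≤ ∑ k ∈ range K, 3 / (2 * (σ + 1)) * (f (k + 1) - f k) := by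
        gcongr with k
        simpa [f, mul_add, add_right_comm] using
          rpow_le_mul_add_two_rpow_sub_rpow (one_le_two_mul_add hx₀ k) hσ
    _ = 3 / (2 * (σ + 1)) * (f K - f 0) := by rw [← mul_sum, sum_range_sub]
    _ ≤ 3 / (2 * (σ + 1)) * f K := by
        have : 0 ≤ f 0 := by simp only [f]; positivity
        have : 0 < 3 / (2 * (σ + 1)) := div_pos (by norm_num) (by linarith)
        nlinarith

theorem sum_range_rpow_le_of_lt_neg_one (hx₀ : 1 ≤ x₀) {τ : ℝ} (hτ : τ < -1) (m : ℕ) :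
    ∑ k ∈ range m, (2 * (k : ℝ) + x₀) ^ τ ≤ 3 ^ (-τ) / (2 * (-τ - 1)) * x₀ ^ (τ + 1) := by
  set f : ℕ → ℝ := fun k => (2 * (k : ℝ) + x₀) ^ (τ + 1)
  have hc : 0 ≤ 3 ^ (-τ) / (2 * (-τ - 1)) := div_nonneg (by positivity) (by linarith)
  calc ∑ k ∈ range m, (2 * (k : ℝ) + x₀) ^ τ
      ≤ ∑ k ∈ range m, 3 ^ (-τ) / (2 * (-τ - 1)) * (f k - f (k + 1)) := by
        gcongr with k
        simpa [f, mul_add, add_right_comm] using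
          rpow_le_mul_rpow_sub_add_two_rpow (one_le_two_mul_add hx₀ k) hτ
    _ = 3 ^ (-τ) / (2 * (-τ - 1)) * (f 0 - f m) := by rw [← mul_sum, sum_range_sub']
    _ ≤ 3 ^ (-τ) / (2 * (-τ - 1)) * f 0 := by
        have : 0 ≤ f m := by simp only [f]; have := one_le_two_mul_add hx₀ m; positivity
        nlinarith
    _ = 3 ^ (-τ) / (2 * (-τ - 1)) * x₀ ^ (τ + 1) := by simp [f]

variable {a : ℕ → ℝ} {A τ : ℝ}

theorem nonneg_of_forall_le_mul_rpow (hx₀ : 1 ≤ x₀) (ha : ∀ k, 0 ≤ a k)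
    (hA : ∀ k, a k ≤ A * (2 * (k : ℝ) + x₀) ^ τ) : 0 ≤ A :=
  nonneg_of_mul_nonneg_left ((ha 0).trans (hA 0))
    (rpow_pos_of_pos (zero_lt_one.trans_le (one_le_two_mul_add hx₀ 0)) τ)

theorem sum_range_le_of_le_mul_rpow (hx₀ : 1 ≤ x₀) (hτ : τ < -1) (ha : ∀ k, 0 ≤ a k)
    (hA : ∀ k, a k ≤ A * (2 * (k : ℝ) + x₀) ^ τ) (m : ℕ) :
    ∑ k ∈ range m, a k ≤ A * (3 ^ (-τ) / (2 * (-τ - 1)) * x₀ ^ (τ + 1)) := by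
  calc ∑ k ∈ range m, a k ≤ ∑ k ∈ range m, A * (2 * (k : ℝ) + x₀) ^ τ :=
        sum_le_sum fun k _ => hA k
    _ ≤ _ := by
        rw [← mul_sum]
        exact mul_le_mul_of_nonneg_left (sum_range_rpow_le_of_lt_neg_one hx₀ hτ m)
          (nonneg_of_forall_le_mul_rpow hx₀ ha hA)

theorem tsum_le_of_le_mul_rpow (hx₀ : 1 ≤ x₀) (hτ : τ < -1) (ha : ∀ k, 0 ≤ a k)
    (hA : ∀ k, a k ≤ A * (2 * (k : ℝ) + x₀) ^ τ) :
    ∑' k, a k ≤ A * (3 ^ (-τ) / (2 * (-τ - 1)) * x₀ ^ (τ + 1)) :=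
  Real.tsum_le_of_sum_range_le ha (sum_range_le_of_le_mul_rpow hx₀ hτ ha hA)

theorem tsum_le_of_le_mul_rpow_of_le_mul_rpow (hx₀ : 1 ≤ x₀) {B σ : ℝ} (hσ : -1 < σ)
    (hτ : τ < -1) (ha : ∀ k, 0 ≤ a k) (hA : ∀ k, a k ≤ A * (2 * (k : ℝ) + x₀) ^ τ)
    (hB : ∀ k, a k ≤ B * (2 * (k : ℝ) + x₀) ^ σ) {M : ℝ} (hM : 1 ≤ M) :
    ∑' k, a k ≤ B * (3 / (2 * (σ + 1)) * ((x₀ + 4) * M) ^ (σ + 1)) +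
      A * (3 ^ (-τ) / (2 * (-τ - 1)) * M ^ (τ + 1)) := by
  set K := ⌈M⌉₊
  have hMK : M ≤ K := Nat.le_ceil M
  have hKM : (K : ℝ) < M + 1 := Nat.ceil_lt_add_one (by linarith)
  have hsum : Summable a :=
    summable_of_sum_range_le ha (sum_range_le_of_le_mul_rpow hx₀ hτ ha hA)
  rw [← hsum.sum_add_tsum_nat_add K]
  gcongr
  · have hB0 := nonneg_of_forall_le_mul_rpow hx₀ ha hB
    calc ∑ k ∈ range K, a k ≤ ∑ k ∈ range K, B * (2 * (k : ℝ) + x₀) ^ σ :=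
          sum_le_sum fun k _ => hB k
      _ ≤ B * (3 / (2 * (σ + 1)) * (2 * (K : ℝ) + x₀) ^ (σ + 1)) := by
          rw [← mul_sum]
          exact mul_le_mul_of_nonneg_left (sum_range_rpow_le_of_neg_one_lt hx₀ hσ K) hB0
      _ ≤ _ := by
          have hc : 0 ≤ 3 / (2 * (σ + 1)) := div_nonneg (by norm_num) (by linarith)
          have hKx : 2 * (K : ℝ) + x₀ ≤ (x₀ + 4) * M := by nlinarith
          exact mul_le_mul_of_nonneg_left (mul_le_mul_of_nonneg_left
            (rpow_le_rpow (by linarith) hKx (by linarith)) hc) hB0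
  · have hxK : 1 ≤ 2 * (K : ℝ) + x₀ := one_le_two_mul_add hx₀ K
    calc ∑' k, a (k + K) ≤ A * (3 ^ (-τ) / (2 * (-τ - 1)) * (2 * (K : ℝ) + x₀) ^ (τ + 1)) :=
          tsum_le_of_le_mul_rpow hxK hτ (fun k => ha _) fun k => by
            simpa [mul_add, add_comm, add_left_comm, add_assoc] using hA (k + K)
      _ ≤ _ := by
          have hA0 := nonneg_of_forall_le_mul_rpow hx₀ ha hA
          have hc : 0 ≤ 3 ^ (-τ) / (2 * (-τ - 1)) := div_nonneg (by positivity) (by linarith)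
          exact mul_le_mul_of_nonneg_left (mul_le_mul_of_nonneg_left
            (rpow_le_rpow_of_nonpos (by linarith) (by linarith) (by linarith)) hc) hA0

end PowerSums

theorem rpow_abs_sub_one_le {ν γ : ℝ} (hν1 : 1 ≤ ν) (hν2 : ν ≤ 2) :
    ν ^ |γ| - 1 ≤ 2 ^ |γ| * |1 - ν ^ γ| := by
  have hν0 : 0 < ν := by linarith
  have hw : 1 ≤ ν ^ |γ| := one_le_rpow hν1 (abs_nonneg γ)
  rcases le_or_gt 0 γ with hγ | hγ
  · rw [abs_of_nonneg hγ] at hw ⊢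
    rw [abs_sub_comm, abs_of_nonneg (by linarith)]
    nlinarith [one_le_rpow (by norm_num : (1 : ℝ) ≤ 2) hγ]
  · have hνγ : ν ^ γ = (ν ^ |γ|)⁻¹ := by rw [abs_of_neg hγ, rpow_neg hν0.le, inv_inv]
    have h2 : ν ^ |γ| ≤ 2 ^ |γ| := rpow_le_rpow hν0.le hν2 (abs_nonneg γ)
    have hw0 : 0 < ν ^ |γ| := by linarith
    rw [hνγ, abs_of_nonneg (sub_nonneg.2 (inv_le_one_of_one_le₀ hw)),
      show 1 - (ν ^ |γ|)⁻¹ = (ν ^ |γ| - 1) / ν ^ |γ| by field_simp, mul_div_assoc',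
      le_div_iff₀ hw0]
    nlinarith

theorem sub_one_le_mul_abs_one_sub_rpow {ν γ : ℝ} (hγ : γ ≠ 0) (hν1 : 1 ≤ ν) (hν2 : ν ≤ 2) :
    ν - 1 ≤ 2 * 2 ^ |γ| / |γ| * |1 - ν ^ γ| := by
  have hγ0 : 0 < |γ| := abs_pos.2 hγ
  have h := mul_sub_mul_rpow_le one_pos hν1 hγ0.le
  rw [one_rpow, mul_one] at h
  have h' : |γ| * (ν - 1) ≤ 2 * (2 ^ |γ| * |1 - ν ^ γ|) := by
    nlinarith [rpow_abs_sub_one_le (γ := γ) hν1 hν2, one_le_rpow hν1 hγ0.le]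
  rw [div_mul_eq_mul_div, le_div_iff₀ hγ0]
  linarith

theorem rpow_le_rpow_div_of_rpow_le {y t a E : ℝ} (hy : 0 ≤ y) (ha : 0 < a) (hE : 0 ≤ E)
    (h : y ^ a ≤ t) : y ^ E ≤ t ^ (E / a) := by
  calc y ^ E = (y ^ a) ^ (E / a) := by rw [← rpow_mul hy, mul_div_cancel₀ _ ha.ne']
    _ ≤ t ^ (E / a) := rpow_le_rpow (rpow_nonneg hy a) h (div_nonneg hE ha.le)

theorem rpow_mul_rpow_le_of_mul_rpow_le {x y t a E σ : ℝ} (hx : 0 < x) (hy : 0 ≤ y)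
    (ha : 0 < a) (hE : 0 ≤ E) (h : (x * y) ^ a ≤ t) :
    y ^ E * x ^ σ ≤ t ^ (E / a) * x ^ (σ - E) := by
  calc y ^ E * x ^ σ = (x * y) ^ E * x ^ (σ - E) := by
        rw [mul_rpow hx.le hy, rpow_sub hx]; field_simp
    _ ≤ t ^ (E / a) * x ^ (σ - E) := by
        gcongr
        exact rpow_le_rpow_div_of_rpow_le (by positivity) ha hE h

theorem rpow_mul_rpow_le_of_one_add_rpow_add_rpow_le {x l t α β E σ : ℝ} (hx : 0 < x)
    (hl : 0 < l) (hα : 0 < α) (hβ : 0 < β) (hE : 0 ≤ E)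
    (h : 1 + (x * l) ^ α + l ^ (2 * β) ≤ 1 + t) :
    l ^ E * x ^ σ ≤ t ^ (E / α) * x ^ (σ - E) ∧ l ^ E * x ^ σ ≤ t ^ (E / (2 * β)) * x ^ σ := by
  have h₁ := rpow_nonneg (mul_nonneg hx.le hl.le) α
  have h₂ := rpow_nonneg hl.le (2 * β)
  refine ⟨rpow_mul_rpow_le_of_mul_rpow_le hx hl.le hα hE (by linarith), ?_⟩
  gcongr
  exact rpow_le_rpow_div_of_rpow_le hl.le (by positivity) hE (by linarith)

theorem inv_mul_mul_rpow {c δ : ℝ} (hc : 0 ≤ c) (hδ : 0 < δ) (e : ℝ) :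
    δ⁻¹ * (c * δ) ^ e = c ^ e * δ ^ (e - 1) := by
  rw [mul_rpow hc hδ.le, rpow_sub_one hδ.ne']; ring

theorem series_bound_of_exponent_gap {n : ℕ} (hn : 1 ≤ n) {α β γ : ℝ} (hα : 0 < α)
    (hβ : 0 < β) (hγ : γ ≠ 0) {E σ : ℝ} (hσ : -1 < σ) (hσE : σ + 1 < E) :
    ∃ C : ℝ, ∀ μ : ℝ, 0 < μ → 1 < μ ^ (1 / γ) → μ ^ (1 / γ) ≤ 2 → ∀ muk : ℕ → ℝ,
      (∀ k : ℕ, 0 < muk k ∧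
        1 + ((2 * (k : ℝ) + n) * muk k) ^ α + (muk k) ^ (2 * β) = μ ^ (1 / γ)) →
      ((|1 - μ| ^ (1 / α - 1 / (2 * β)) ≤ 1 →
          ∑' k : ℕ, |1 - μ|⁻¹ * (muk k) ^ E * (2 * (k : ℝ) + n) ^ σ ≤
            C * |1 - μ| ^ (E / α - 1)) ∧
       (1 < |1 - μ| ^ (1 / α - 1 / (2 * β)) →
          ∑' k : ℕ, |1 - μ|⁻¹ * (muk k) ^ E * (2 * (k : ℝ) + n) ^ σ ≤
            C * |1 - μ| ^ (E / (2 * β) + (1 / α - 1 / (2 * β)) * (σ + 1) - 1))) := by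
  have hn1 : (1 : ℝ) ≤ n := by exact_mod_cast hn
  have hτ : σ - E < -1 := by linarith
  have hE : 0 ≤ E := by linarith
  set c : ℝ := 2 * 2 ^ |γ| / |γ|
  have hc : 0 < c := by have := abs_pos.2 hγ; positivity
  set T : ℝ := 3 ^ (-(σ - E)) / (2 * (-(σ - E) - 1))
  set S : ℝ := 3 / (2 * (σ + 1)) * ((n : ℝ) + 4) ^ (σ + 1)
  set C₁ := c ^ (E / α) * (T * (n : ℝ) ^ (σ - E + 1))
  set C₂ := c ^ (E / (2 * β)) * S + c ^ (E / α) * T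
  refine ⟨max C₁ C₂, fun μ hμ hν1 hν2 muk hmuk => ?_⟩
  set δ := |1 - μ|
  set ρ := 1 / α - 1 / (2 * β)
  have hεδ : μ ^ (1 / γ) - 1 ≤ c * δ := by
    simpa [← rpow_mul hμ.le, hγ] using sub_one_le_mul_abs_one_sub_rpow hγ hν1.le hν2
  have hδ : 0 < δ := pos_of_mul_pos_right (by linarith) hc.le
  have hx : ∀ k : ℕ, 0 < 2 * (k : ℝ) + n := fun k => by positivity
  have hterm (k : ℕ) := rpow_mul_rpow_le_of_one_add_rpow_add_rpow_le (σ := σ) (t := c * δ)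
    (hx k) (hmuk k).1 hα hβ hE (by linarith [(hmuk k).2])
  have ha : ∀ k, 0 ≤ δ⁻¹ * muk k ^ E * (2 * (k : ℝ) + n) ^ σ := fun k => by
    have := (hmuk k).1; have := hx k; positivity
  have hA : ∀ k, δ⁻¹ * muk k ^ E * (2 * (k : ℝ) + n) ^ σ ≤
      δ⁻¹ * (c * δ) ^ (E / α) * (2 * (k : ℝ) + n) ^ (σ - E) := fun k => by
    simpa only [mul_assoc] using mul_le_mul_of_nonneg_left (hterm k).1 (inv_nonneg.2 hδ.le)
  have hB : ∀ k, δ⁻¹ * muk k ^ E * (2 * (k : ℝ) + n) ^ σ ≤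
      δ⁻¹ * (c * δ) ^ (E / (2 * β)) * (2 * (k : ℝ) + n) ^ σ := fun k => by
    simpa only [mul_assoc] using mul_le_mul_of_nonneg_left (hterm k).2 (inv_nonneg.2 hδ.le)
  constructor
  · intro _
    calc _ ≤ δ⁻¹ * (c * δ) ^ (E / α) * (T * (n : ℝ) ^ (σ - E + 1)) :=
          tsum_le_of_le_mul_rpow hn1 hτ ha hA
      _ = C₁ * δ ^ (E / α - 1) := by rw [inv_mul_mul_rpow hc.le hδ]; ring
      _ ≤ max C₁ C₂ * δ ^ (E / α - 1) := by gcongr; exact le_max_left _ _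
  · intro hM
    have e₁ : δ ^ (E / (2 * β) - 1) * δ ^ (ρ * (σ + 1)) =
        δ ^ (E / (2 * β) + ρ * (σ + 1) - 1) := by rw [← rpow_add hδ]; ring_nf
    have e₂ : δ ^ (E / α - 1) * δ ^ (ρ * (σ - E + 1)) =
        δ ^ (E / (2 * β) + ρ * (σ + 1) - 1) := by rw [← rpow_add hδ]; simp only [ρ]; ring_nf
    calc _ ≤ δ⁻¹ * (c * δ) ^ (E / (2 * β)) *
            (3 / (2 * (σ + 1)) * (((n : ℝ) + 4) * δ ^ ρ) ^ (σ + 1)) +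
          δ⁻¹ * (c * δ) ^ (E / α) * (T * (δ ^ ρ) ^ (σ - E + 1)) :=
          tsum_le_of_le_mul_rpow_of_le_mul_rpow hn1 hσ hτ ha hA hB hM.le
      _ = C₂ * δ ^ (E / (2 * β) + ρ * (σ + 1) - 1) := by
          rw [inv_mul_mul_rpow hc.le hδ, inv_mul_mul_rpow hc.le hδ, mul_rpow (by positivity)
            (by positivity), ← rpow_mul hδ.le, ← rpow_mul hδ.le]
          linear_combination (c ^ (E / (2 * β)) * S) * e₁ + (c ^ (E / α) * T) * e₂
      _ ≤ max C₁ C₂ * δ ^ (E / (2 * β) + ρ * (σ + 1) - 1) := by gcongr; exact le_max_right _ _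

theorem phiKR_le_mul (n : ℕ) {s : ℝ} (hs : 0 ≤ s) : phiKR n s ≤ n * s := by
  have : 0 ≤ (n : ℝ) * s := by positivity
  unfold phiKR; split_ifs <;> linarith

theorem phiKR_lt_mul (n : ℕ) {s : ℝ} (hs : 0 < s) : phiKR n s < n * s := by
  have : 0 ≤ (n : ℝ) * s := by positivity
  unfold phiKR; split_ifs <;> linarith

theorem neg_half_lt_phiKR {n : ℕ} (hn : 1 ≤ n) (s : ℝ) : -1 / 2 < phiKR n s := by
  have hn1 : (1 : ℝ) ≤ n := by exact_mod_cast hn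
  unfold phiKR; split_ifs with h
  · have : 1 / (2 * (n : ℝ) + 1) < 1 := (div_lt_one (by linarith)).2 (by linarith)
    linarith
  · have : 0 < (n : ℝ) * s :=
      mul_pos (by linarith) ((by positivity : (0 : ℝ) < _).trans (not_le.1 h))
    linarith

theorem ENNReal.toReal_inv_le_half {q : ℝ≥0∞} (hq : 2 ≤ q) : (q⁻¹).toReal ≤ 1 / 2 := by
  simpa using ENNReal.toReal_mono (by simp) (ENNReal.inv_le_inv.2 hq)

theorem ENNReal.toReal_inv_lt_half {q : ℝ≥0∞} (hq : 2 < q) : (q⁻¹).toReal < 1 / 2 := by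
  simpa using (ENNReal.toReal_lt_toReal (by simpa using (zero_lt_two.trans hq).ne') (by simp)).2
    (ENNReal.inv_lt_inv.2 hq)

theorem two_mul_div_le_mul_one_div_sub {d r : ℝ} (hd : 0 ≤ d) (hr : 0 < r)
    (hr2 : r ≤ 2 * (d + 1) / (d + 3)) : 2 * d / (d + 1) ≤ d * (1 / r - (1 - 1 / r)) := by
  have h : (d + 3) / (2 * (d + 1)) ≤ 1 / r := by
    simpa [one_div_div] using one_div_le_one_div_of_le hr hr2
  have h2 : 2 / (d + 1) ≤ 1 / r - (1 - 1 / r) := by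
    have : 2 * ((d + 3) / (2 * (d + 1))) - 1 = 2 / (d + 1) := by field_simp; ring
    linarith
  calc 2 * d / (d + 1) = d * (2 / (d + 1)) := by ring
    _ ≤ _ := mul_le_mul_of_nonneg_left h2 hd

theorem phiKR_add_phiKR_add_one_lt (n : ℕ) {d : ℕ} (hd : 1 ≤ d) {p r : ℝ} {q : ℝ≥0∞}
    (hp : 0 < p) (hp2 : p ≤ 2) (hq : 2 ≤ q) (hr : 0 < r) (hr2 : r ≤ 2 * (d + 1) / (d + 3))
    (hne : ¬(d = 1 ∧ p = 2 ∧ q = 2)) :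
    phiKR n (1 / p - 1 / 2) + phiKR n (1 / 2 - (q⁻¹).toReal) + 1 <
      n * (1 / p - (q⁻¹).toReal) + d * (1 / r - (1 - 1 / r)) := by
  set u := 1 / p - 1 / 2
  set v := 1 / 2 - (q⁻¹).toReal
  have hu : 0 ≤ u := by simp only [u]; linarith [one_div_le_one_div_of_le hp hp2]
  have hv : 0 ≤ v := by simp only [v]; linarith [ENNReal.toReal_inv_le_half hq]
  have huv : (n : ℝ) * (1 / p - (q⁻¹).toReal) = n * u + n * v := by ring
  have hdr := two_mul_div_le_mul_one_div_sub (d := d) (by positivity) hr hr2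
  have hφu := phiKR_le_mul n hu
  have hφv := phiKR_le_mul n hv
  rcases Nat.lt_or_ge 1 d with hd2 | hd1
  · have : 1 < 2 * (d : ℝ) / (d + 1) := by
      rw [one_lt_div (by positivity)]; exact_mod_cast (by omega : d + 1 < 2 * d)
    linarith
  · obtain rfl : d = 1 := le_antisymm hd1 hd
    have : 1 ≤ (1 : ℝ) * (1 / r - (1 - 1 / r)) := by norm_num at hdr ⊢; linarith
    rcases not_and_or.1 (fun h => hne ⟨rfl, h⟩) with hp' | hq'
    · have := phiKR_lt_mul n (s := u) (by
        simp only [u]; linarith [one_div_lt_one_div_of_lt hp (lt_of_le_of_ne hp2 hp')])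
      push_cast; linarith
    · have := phiKR_lt_mul n (s := v) (by
        simp only [v]; linarith [ENNReal.toReal_inv_lt_half (lt_of_le_of_ne hq (Ne.symm hq'))])
      push_cast; linarith

/-- Analytic core of the last two cases of Theorem 2.11 (regime `1 < μ^{1/γ} ≤ 2`):
with `μ_k` the unique positive solution of `1 + ((2k+n)λ)^α + λ^(2β) = μ^(1/γ)`,
`E = n(1/p−1/q) + d(1/r−1/r′)`, `σ = φ(1/p−1/2) + φ(1/2−1/q)`, `D = E/α − 1` and
`C₀ = E/(2β) + (1/α − 1/(2β))(σ+1) − 1`, one has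
`Σ_k |1−μ|⁻¹ μ_k^E (2k+n)^σ ≤ C |1−μ|^D` if `|1−μ|^{1/α−1/(2β)} ≤ 1`
and `≤ C |1−μ|^{C₀}` otherwise. -/
theorem series_bound_inhomogeneous_small (n d : ℕ) (hn : 1 ≤ n) (hd : 1 ≤ d)
    (α β γ : ℝ) (hα : 0 < α) (hβ : 0 < β) (hγ : γ ≠ 0)
    (p r : ℝ) (q : ℝ≥0∞)
    (hp1 : 1 ≤ p) (hp2 : p ≤ 2) (hq : 2 ≤ q)
    (hr1 : 1 ≤ r) (hr2 : r ≤ 2 * (d + 1) / (d + 3))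
    (hne : ¬(d = 1 ∧ p = 2 ∧ q = 2)) :
    ∃ C : ℝ, ∀ μ : ℝ, 0 < μ → 1 < μ ^ (1 / γ) → μ ^ (1 / γ) ≤ 2 → ∀ muk : ℕ → ℝ,
      (∀ k : ℕ, 0 < muk k ∧
        1 + ((2 * (k : ℝ) + n) * muk k) ^ α + (muk k) ^ (2 * β) = μ ^ (1 / γ)) →
      (let E : ℝ := n * (1 / p - (q⁻¹).toReal) + d * (1 / r - (1 - 1 / r))
       let σ : ℝ := phiKR n (1 / p - 1 / 2) + phiKR n (1 / 2 - (q⁻¹).toReal)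
       (|1 - μ| ^ (1 / α - 1 / (2 * β)) ≤ 1 →
          ∑' k : ℕ, |1 - μ|⁻¹ * (muk k) ^ E * (2 * (k : ℝ) + n) ^ σ ≤
            C * |1 - μ| ^ (E / α - 1)) ∧
       (1 < |1 - μ| ^ (1 / α - 1 / (2 * β)) →
          ∑' k : ℕ, |1 - μ|⁻¹ * (muk k) ^ E * (2 * (k : ℝ) + n) ^ σ ≤
            C * |1 - μ| ^ (E / (2 * β) + (1 / α - 1 / (2 * β)) * (σ + 1) - 1))) := by
  have hσ : -1 < phiKR n (1 / p - 1 / 2) + phiKR n (1 / 2 - (q⁻¹).toReal) := by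
    linarith [neg_half_lt_phiKR hn (1 / p - 1 / 2), neg_half_lt_phiKR hn (1 / 2 - (q⁻¹).toReal)]
  exact series_bound_of_exponent_gap hn hα hβ hγ hσ
    (phiKR_add_phiKR_add_one_lt n hd (by linarith) hp2 hq (by linarith) hr2 hne)
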